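/- arXiv:1205.2300 — 4 statements merged into one kernel-verified Lean document; each statement's English description precedes it below -/
import Mathlib

section
/- Let s ≥ 2 and t ≥ 1 be integers and α ≥ 0. Let Ω be a finite probability space carrying random variables X : Ω → [s], uniformly distributed, and Y₁, …, Y_t : Ω → {0, 1}, and let X̂ = g(Y₁, …, Y_t) for some function g : {0,1}^t → [s]. Assume that for every j ∈ [t], the conditional Shannon entropy (base 2) satisfies H(Y_j | Y₁, …, Y_{j−1}, X) ≥ 1 − 4α². Then Pr[X̂ ≠ X] ≥ 1 − (4α²·t + 1)/log₂ s. -/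
open scoped ComplexOrder Matrix BigOperators Kronecker
open MeasureTheory

noncomputable section

open Classical in
/-- Probability of the event `E` under the weight function `p` on a finite space. -/
def pr {Ω : Type*} [Fintype Ω] (p : Ω → ℝ) (E : Ω → Prop) : ℝ :=
  ∑ ω, if E ω then p ω else 0

/-- Conditional Shannon entropy (base 2) `H(U | V)` of finitely-valued random
variables on a finite probability space with weights `p`. -/
def condEnt {Ω α β : Type*} [Fintype Ω] [Fintype α] [Fintype β]
    (p : Ω → ℝ) (U : Ω → α) (V : Ω → β) : ℝ :=
  ∑ u : α, ∑ v : β,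
    -(pr p fun ω => U ω = u ∧ V ω = v) *
      Real.logb 2 ((pr p fun ω => U ω = u ∧ V ω = v) / (pr p fun ω => V ω = v))

/-! Since `H(X) + H(Y | X) = H(Y) + H(X | Y)` for `Y = (Y₁, …, Y_t)`, it suffices to note that
`H(X) = log₂ s` by uniformity, `H(Y) ≤ t` since `Y` takes `2^t` values, `H(Y | X) ≥ t(1 - 4α²)` by
the chain rule and the hypothesis, and `H(X | Y) ≤ 1 + Pr[X̂ ≠ X] log₂ s` by Fano's inequality. -/

open Finset Real

section Probability

open Classical

variable {Ω α β : Type*} [Fintype Ω] [Fintype α] [Fintype β] {p : Ω → ℝ}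

lemma pr_congr {E F : Ω → Prop} (h : ∀ ω, E ω ↔ F ω) : pr p E = pr p F :=
  congrArg (pr p) (funext fun ω => propext (h ω))

lemma pr_nonneg (hp0 : ∀ ω, 0 ≤ p ω) (E : Ω → Prop) : 0 ≤ pr p E :=
  sum_nonneg fun ω _ => by split_ifs <;> simp [hp0 ω]

lemma pr_pos (hp0 : ∀ ω, 0 ≤ p ω) {E : Ω → Prop} {ω : Ω} (hω : 0 < p ω) (hE : E ω) :
    0 < pr p E := by
  unfold pr
  refine hω.trans_le ?_
  have := single_le_sum (fun ω _ => ?_) (mem_univ ω) (f := fun ω => if E ω then p ω else 0)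
  · simpa [hE] using this
  · split_ifs <;> simp [hp0 ω]

lemma pr_mono (hp0 : ∀ ω, 0 ≤ p ω) {E F : Ω → Prop} (h : ∀ ω, E ω → F ω) :
    pr p E ≤ pr p F :=
  sum_le_sum fun ω _ => by
    by_cases hE : E ω
    · simp [hE, h ω hE]
    · split_ifs <;> simp [hp0 ω]

lemma pr_eq_zero {E : Ω → Prop} (h : ∀ ω, ¬E ω) : pr p E = 0 :=
  sum_eq_zero fun ω _ => if_neg (h ω)

lemma pr_true (hp1 : ∑ ω, p ω = 1) : pr p (fun _ => True) = 1 := by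
  simpa [pr] using hp1

lemma sum_pr_mul (U : Ω → α) (V : Ω → β) (f : α → β → ℝ) :
    ∑ u, ∑ v, pr p (fun ω => U ω = u ∧ V ω = v) * f u v = ∑ ω, p ω * f (U ω) (V ω) := by
  unfold pr
  simp only [Finset.sum_mul, ite_mul, zero_mul, ite_and]
  rw [Finset.sum_comm]
  simp_rw [Finset.sum_comm (s := (univ : Finset α))]
  rw [Finset.sum_comm]
  simp

lemma sum_pr_fiber (U : Ω → α) (E : Ω → Prop) :
    ∑ u, pr p (fun ω => U ω = u ∧ E ω) = pr p E := by
  unfold pr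
  rw [Finset.sum_comm]
  refine sum_congr rfl fun ω _ => ?_
  by_cases hE : E ω <;> simp [hE]

end Probability

lemma neg_mul_log_div_le {q Q n : ℝ} (hq : 0 ≤ q) (hqQ : q ≤ Q) (hn : 0 < n) :
    -q * log (q / Q) ≤ Q / n - q + q * log n := by
  rcases hq.eq_or_lt with rfl | hq
  · simpa using div_nonneg hqQ hn.le
  have hQ := hq.trans_le hqQ
  have key : q * log (Q / (n * q)) ≤ q * (Q / (n * q) - 1) :=
    mul_le_mul_of_nonneg_left (log_le_sub_one_of_pos (by positivity)) hq.le
  rw [log_div hQ.ne' (by positivity), log_mul hn.ne' hq.ne'] at key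
  rw [log_div hq.ne' hQ.ne']
  have : q * (Q / (n * q) - 1) = Q / n - q := by field_simp
  linarith

lemma sum_neg_mul_logb_div_le {α : Type*} [Fintype α] {q : α → ℝ} (hq : ∀ u, 0 ≤ q u) :
    ∑ u, -q u * logb 2 (q u / ∑ u', q u') ≤ (∑ u, q u) * logb 2 (Fintype.card α) := by
  rcases isEmpty_or_nonempty α with hα | hα
  · simp
  have hn : (0 : ℝ) < Fintype.card α := by exact_mod_cast Fintype.card_pos
  have hsum := sum_le_sum fun u (_ : u ∈ univ) =>
    neg_mul_log_div_le (hq u) (single_le_sum (fun u _ => hq u) (mem_univ u)) hn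
  simp only [logb, ← mul_div_assoc, ← sum_div]
  gcongr
  simpa [sum_add_distrib, ← sum_mul, mul_div_cancel₀ _ hn.ne'] using hsum

section ConditionalEntropy

variable {Ω α β γ : Type*} [Fintype Ω] [Fintype α] [Fintype β] [Fintype γ] {p : Ω → ℝ}

/-- Writing `H(U | V)` as an expectation over `Ω` shows that it only depends on the partitions
of `Ω` induced by `V` and by `(U, V)`. -/
lemma condEnt_eq_sum (U : Ω → α) (V : Ω → β) :
    condEnt p U V = ∑ ω, p ω * -logb 2 ((pr p fun ω' => U ω' = U ω ∧ V ω' = V ω) /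
      (pr p fun ω' => V ω' = V ω)) := by
  rw [condEnt, ← sum_pr_mul U V fun u v =>
    -logb 2 ((pr p fun ω => U ω = u ∧ V ω = v) / pr p fun ω => V ω = v)]
  simp only [neg_mul, mul_neg]

lemma condEnt_congr {α' β' : Type*} [Fintype α'] [Fintype β'] {U : Ω → α} {V : Ω → β}
    {U' : Ω → α'} {V' : Ω → β'}
    (hUV : ∀ ω ω', U ω' = U ω ∧ V ω' = V ω ↔ U' ω' = U' ω ∧ V' ω' = V' ω)
    (hV : ∀ ω ω', V ω' = V ω ↔ V' ω' = V' ω) :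
    condEnt p U V = condEnt p U' V' := by
  simp only [condEnt_eq_sum, pr_congr (hUV _), pr_congr (hV _)]

lemma condEnt_nonneg (hp0 : ∀ ω, 0 ≤ p ω) (U : Ω → α) (V : Ω → β) : 0 ≤ condEnt p U V := by
  rw [condEnt_eq_sum]
  refine sum_nonneg fun ω _ => mul_nonneg (hp0 ω) (neg_nonneg.2 ?_)
  exact logb_nonpos one_lt_two (div_nonneg (pr_nonneg hp0 _) (pr_nonneg hp0 _))
    (div_le_one_of_le₀ (pr_mono hp0 fun _ h => h.2) (pr_nonneg hp0 _))

lemma condEnt_pair_eq_add (hp0 : ∀ ω, 0 ≤ p ω) (W : Ω → γ) (U : Ω → α) (V : Ω → β) :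
    condEnt p (fun ω => (W ω, U ω)) V = condEnt p W V + condEnt p U (fun ω => (V ω, W ω)) := by
  simp only [condEnt_eq_sum, Prod.ext_iff, ← sum_add_distrib, ← mul_add]
  refine sum_congr rfl fun ω _ => ?_
  rcases (hp0 ω).eq_or_lt with hω | hω
  · simp [← hω]
  have hWUV := pr_pos hp0 (E := fun ω' => (W ω' = W ω ∧ U ω' = U ω) ∧ V ω' = V ω) hω
    ⟨⟨rfl, rfl⟩, rfl⟩
  have hWV := pr_pos hp0 (E := fun ω' => W ω' = W ω ∧ V ω' = V ω) hω ⟨rfl, rfl⟩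
  have hV := pr_pos hp0 (E := fun ω' => V ω' = V ω) hω rfl
  rw [pr_congr (E := fun ω' => U ω' = U ω ∧ V ω' = V ω ∧ W ω' = W ω)
      (F := fun ω' => (W ω' = W ω ∧ U ω' = U ω) ∧ V ω' = V ω) fun _ => by tauto,
    pr_congr (E := fun ω' => V ω' = V ω ∧ W ω' = W ω)
      (F := fun ω' => W ω' = W ω ∧ V ω' = V ω) fun _ => and_comm,
    logb_div hWUV.ne' hV.ne', logb_div hWV.ne' hV.ne', logb_div hWUV.ne' hWV.ne']
  ring

lemma condEnt_unit_prod (U : Ω → α) (V : Ω → β) :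
    condEnt p U (fun ω => ((), V ω)) = condEnt p U V :=
  condEnt_congr (fun _ _ => by simp) fun _ _ => by simp

lemma condEnt_le_pr_mul_logb_card (hp0 : ∀ ω, 0 ≤ p ω) (U : Ω → α) (V : Ω → β)
    (B : β → Prop) (hdet : ∀ ω ω', ¬B (V ω) → V ω' = V ω → U ω' = U ω) :
    condEnt p U V ≤ pr p (fun ω => B (V ω)) * logb 2 (Fintype.card α) := by
  have hslice : ∀ v, ∑ u, -(pr p fun ω => U ω = u ∧ V ω = v) *
      logb 2 ((pr p fun ω => U ω = u ∧ V ω = v) / pr p fun ω => V ω = v) ≤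
      (pr p fun ω => V ω = v ∧ B (V ω)) * logb 2 (Fintype.card α) := by
    intro v
    by_cases hB : B v
    · rw [pr_congr (F := fun ω => V ω = v) fun ω => and_iff_left_of_imp (· ▸ hB),
        ← sum_pr_fiber U]
      exact sum_neg_mul_logb_div_le fun u => pr_nonneg hp0 _
    rw [pr_eq_zero (E := fun ω => V ω = v ∧ B (V ω)) fun ω h => hB (h.1 ▸ h.2), zero_mul]
    refine (sum_eq_zero fun u _ => ?_).le
    by_cases hu : ∃ ω, U ω = u ∧ V ω = v
    · obtain ⟨ω, rfl, rfl⟩ := hu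
      rw [pr_congr (F := fun ω' => V ω' = V ω) fun ω' =>
        and_iff_right_of_imp (hdet ω ω' hB)]
      rcases eq_or_ne (pr p fun ω' => V ω' = V ω) 0 with h | h <;> simp [h]
    · rw [pr_eq_zero fun ω h => hu ⟨ω, h⟩, neg_zero, zero_mul]
  rw [condEnt, Finset.sum_comm, ← sum_pr_fiber V, sum_mul]
  exact sum_le_sum fun v _ => hslice v

lemma condEnt_le_logb_card (hp0 : ∀ ω, 0 ≤ p ω) (hp1 : ∑ ω, p ω = 1) (U : Ω → α)
    (V : Ω → β) : condEnt p U V ≤ logb 2 (Fintype.card α) := by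
  simpa [pr_true hp1] using
    condEnt_le_pr_mul_logb_card hp0 U V (fun _ => True) fun _ _ h => absurd trivial h

lemma condEnt_le_one_add_pr_ne_mul_logb_card (hp0 : ∀ ω, 0 ≤ p ω) (hp1 : ∑ ω, p ω = 1)
    (U : Ω → α) (V : Ω → β) (f : β → α) :
    condEnt p U V ≤ 1 + pr p (fun ω => f (V ω) ≠ U ω) * logb 2 (Fintype.card α) := by
  classical
  -- the error indicator is a function of `(U, V)`, so adjoining it to `U` costs nothing
  set E : Ω → Bool := fun ω => decide (f (V ω) ≠ U ω) with hE
  have hjoin : condEnt p U V = condEnt p (fun ω => (E ω, U ω)) V := by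
    refine condEnt_congr (fun ω ω' => ?_) fun _ _ => Iff.rfl
    constructor
    · rintro ⟨hU, hV⟩
      exact ⟨Prod.ext (by simp [E, hU, hV]) hU, hV⟩
    · rintro ⟨hEU, hV⟩
      exact ⟨congrArg Prod.snd hEU, hV⟩
  have hEV : condEnt p E V ≤ 1 := by
    simpa using condEnt_le_logb_card hp0 hp1 E V
  have hUVE := condEnt_le_pr_mul_logb_card hp0 U (fun ω => (V ω, E ω)) (fun x => x.2 = true)
    fun ω ω' hω hω' => by
      simp only [Prod.ext_iff, hE, decide_eq_decide] at hω hω'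
      simp only [decide_eq_true_eq, not_not] at hω
      rw [← (not_iff_not.mp hω'.2).mpr hω, hω'.1, hω]
  rw [hjoin, condEnt_pair_eq_add hp0]
  simp only [hE, decide_eq_true_eq] at hUVE
  linarith

lemma mul_le_condEnt_of_le_condEnt_prefix (hp0 : ∀ ω, 0 ≤ p ω) {t : ℕ} (Y : Fin t → Ω → β)
    (X : Ω → γ) (c : ℝ)
    (hY : ∀ j : Fin t, c ≤ condEnt p (Y j)
      fun ω => ((fun i : Fin j.1 => Y ⟨i.1, lt_trans i.2 j.2⟩ ω), X ω)) :
    t * c ≤ condEnt p (fun ω i => Y i ω) X := by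
  suffices h : ∀ k (hk : k ≤ t),
      k * c ≤ condEnt p (fun ω (i : Fin k) => Y ⟨i.1, lt_of_lt_of_le i.2 hk⟩ ω) X
    from h t le_rfl
  intro k hk
  induction k with
  | zero => simpa using condEnt_nonneg hp0 _ X
  | succ k ih =>
    set prefixY : Ω → Fin k → β := fun ω i => Y ⟨i.1, lt_trans i.2 hk⟩ ω
    have hsplit : condEnt p (fun ω (i : Fin (k + 1)) => Y ⟨i.1, lt_of_lt_of_le i.2 hk⟩ ω) X =
        condEnt p (fun ω => (prefixY ω, Y ⟨k, hk⟩ ω)) X :=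
      condEnt_congr (fun _ _ => by simp [prefixY, funext_iff, Fin.forall_fin_succ'])
        fun _ _ => Iff.rfl
    have hswap : condEnt p (Y ⟨k, hk⟩) (fun ω => (X ω, prefixY ω)) =
        condEnt p (Y ⟨k, hk⟩) (fun ω => (prefixY ω, X ω)) :=
      condEnt_congr (fun _ _ => by simp [Prod.ext_iff, and_comm]) fun _ _ => by
        simp [Prod.ext_iff, and_comm]
    rw [hsplit, condEnt_pair_eq_add hp0, hswap, Nat.cast_succ, add_one_mul]
    exact add_le_add (ih (by omega)) (hY ⟨k, hk⟩)

end ConditionalEntropy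

section Entropy

variable {Ω α β : Type*} [Fintype Ω] [Fintype α] [Fintype β] {p : Ω → ℝ}

def entropy (p : Ω → ℝ) (U : Ω → α) : ℝ :=
  condEnt p U fun _ => ()

lemma entropy_add_condEnt_comm (hp0 : ∀ ω, 0 ≤ p ω) (U : Ω → α) (V : Ω → β) :
    entropy p U + condEnt p V U = entropy p V + condEnt p U V := by
  have hswap : condEnt p (fun ω => (U ω, V ω)) (fun _ => ()) =
      condEnt p (fun ω => (V ω, U ω)) (fun _ => ()) :=
    condEnt_congr (fun _ _ => by simp [Prod.ext_iff, and_comm]) fun _ _ => Iff.rfl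
  rwa [condEnt_pair_eq_add hp0, condEnt_pair_eq_add hp0, condEnt_unit_prod,
    condEnt_unit_prod] at hswap

lemma entropy_eq_logb_card (hp1 : ∑ ω, p ω = 1) {U : Ω → α}
    (hU : ∀ u, pr p (fun ω => U ω = u) = 1 / Fintype.card α) :
    entropy p U = logb 2 (Fintype.card α) := by
  simp [entropy, condEnt_eq_sum, hU, pr_true hp1, ← sum_mul, hp1]

end Entropy

theorem fano_lower_bound_general
    {Ω : Type*} [Fintype Ω] (s t : ℕ) (hs : 2 ≤ s)
    (α : ℝ)
    (p : Ω → ℝ) (hp0 : ∀ ω, 0 ≤ p ω) (hp1 : ∑ ω, p ω = 1)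
    (X : Ω → Fin s) (hX : ∀ x, pr p (fun ω => X ω = x) = 1 / (s : ℝ))
    (Y : Fin t → Ω → Bool) (g : (Fin t → Bool) → Fin s)
    (hent : ∀ j : Fin t,
      1 - 4 * α ^ 2 ≤ condEnt p (Y j)
        (fun ω => ((fun i : Fin j.1 => Y ⟨i.1, lt_trans i.2 j.2⟩ ω), X ω))) :
    1 - (4 * α ^ 2 * (t : ℝ) + 1) / Real.logb 2 (s : ℝ) ≤
      pr p (fun ω => g (fun i => Y i ω) ≠ X ω) := by
  have hlog : 0 < logb 2 (s : ℝ) := logb_pos one_lt_two (by exact_mod_cast hs)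
  have hfano := condEnt_le_one_add_pr_ne_mul_logb_card hp0 hp1 X (fun ω i => Y i ω) g
  have hprefix := mul_le_condEnt_of_le_condEnt_prefix hp0 Y X _ hent
  have hsymm := entropy_add_condEnt_comm hp0 X (fun ω i => Y i ω)
  have hentX : entropy p X = logb 2 s := by
    simpa using entropy_eq_logb_card hp1 (U := X) (by simpa using hX)
  have hentY : entropy p (fun ω i => Y i ω) ≤ t := by
    simpa [entropy, logb_pow] using condEnt_le_logb_card hp0 hp1 (fun ω i => Y i ω) fun _ => ()
  rw [Fintype.card_fin] at hfano
  rw [one_sub_div hlog.ne', div_le_iff₀ hlog]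
  linarith

/-- **Fano-type lower bound for adaptive binary measurements** (information-
theoretic core of Lemma 4 of "Quantum Tomography via Compressed Sensing").

If `X` is uniform on `[s]`, `Y₁, …, Y_t` are binary random variables with
`H(Y_j | Y₁, …, Y_{j-1}, X) ≥ 1 - 4α²` for each `j`, and `X̂ = g(Y₁, …, Y_t)`,
then `Pr[X̂ ≠ X] ≥ 1 - (4α²t + 1)/log₂ s`. -/
theorem fano_lower_bound
    {Ω : Type*} [Fintype Ω] (s t : ℕ) (hs : 2 ≤ s) (ht : 1 ≤ t)
    (α : ℝ) (hα : 0 ≤ α)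
    (p : Ω → ℝ) (hp0 : ∀ ω, 0 ≤ p ω) (hp1 : ∑ ω, p ω = 1)
    (X : Ω → Fin s) (hX : ∀ x, pr p (fun ω => X ω = x) = 1 / (s : ℝ))
    (Y : Fin t → Ω → Bool) (g : (Fin t → Bool) → Fin s)
    (hent : ∀ j : Fin t,
      1 - 4 * α ^ 2 ≤ condEnt p (Y j)
        (fun ω => ((fun i : Fin j.1 => Y ⟨i.1, lt_trans i.2 j.2⟩ ω), X ω))) :
    1 - (4 * α ^ 2 * (t : ℝ) + 1) / Real.logb 2 (s : ℝ) ≤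
      pr p (fun ω => g (fun i => Y i ω) ≠ X ω) :=
  fano_lower_bound_general s t hs α p hp0 hp1 X hX Y g hent
end
end

section
/- Let r ≥ 1, let Π be a d×d real symmetric orthogonal projection matrix of rank r, and set ρ₀ = Π/r. Then for every real d×d matrix M and all real orthogonal matrices O, O' (satisfying OᵀO = O'ᵀO' = I): | ‖M − O'ρ₀O'ᵀ‖_tr − ‖M − Oρ₀Oᵀ‖_tr | ≤ (4/√r)·‖O' − O‖_F. In other words, the function O ↦ ‖M − Oρ₀Oᵀ‖_tr is Lipschitz on the orthogonal group with constant 4/√r with respect to the Frobenius norm. -/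
/-
The trace norm is dual to the operator norm: `‖X‖_tr = tr (Qᵀ X)` maximised over contractions
`Q`, the maximum being attained at the polar factor of `X`. Duality gives the triangle inequality
and, with Cauchy–Schwarz for the Frobenius inner product, `‖A B‖_tr ≤ ‖A‖_F ‖B‖_F`. Since
`O' ρ₀ O'ᵀ - O ρ₀ Oᵀ = (O' - O) ρ₀ O'ᵀ + O ρ₀ (O' - O)ᵀ` and `‖ρ₀‖_F = 1 / √r` is invariant under
orthogonal factors, the variation is at most `(2 / √r) ‖O' - O‖_F`.
-/

open scoped ComplexOrder Matrix BigOperators Kronecker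
open MeasureTheory

noncomputable section

/-- Trace norm of a real square matrix: `Tr √(XᵀX)`. -/
def traceNormR {ι : Type*} [Fintype ι] [DecidableEq ι] (X : Matrix ι ι ℝ) : ℝ :=
  ((((Matrix.posSemidef_conjTranspose_mul_self X).1.eigenvectorUnitary : Matrix ι ι ℝ) *
    Matrix.diagonal ((RCLike.ofReal : ℝ → ℝ) ∘ Real.sqrt ∘ (Matrix.posSemidef_conjTranspose_mul_self X).1.eigenvalues) *
    (star (Matrix.posSemidef_conjTranspose_mul_self X).1.eigenvectorUnitary : Matrix ι ι ℝ))).trace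

/-- Frobenius norm of a real matrix. -/
def frobNormR {ι : Type*} [Fintype ι] [DecidableEq ι] (X : Matrix ι ι ℝ) : ℝ :=
  Real.sqrt (Xᵀ * X).trace

/-- Operator norm (largest singular value) of a real matrix. -/
def opNormR {ι : Type*} [Fintype ι] [DecidableEq ι] (X : Matrix ι ι ℝ) : ℝ :=
  ‖Matrix.toEuclideanCLM (𝕜 := ℝ) X‖

open Matrix

theorem Matrix.trace_eq_rank_of_isIdempotentElem {K n : Type*} [Field K] [Fintype n]
    [DecidableEq n] {P : Matrix n n K} (hP : IsIdempotentElem P) : P.trace = P.rank := by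
  rw [← Matrix.trace_toLin'_eq,
    (LinearMap.IsIdempotentElem.isProj_range P.toLin' (hP.map Matrix.toLinAlgEquiv')).trace]
  rfl

section Frobenius

variable {n : Type*} [Fintype n]

lemma trace_transpose_mul_le_sum_sqrt_diag (A B : Matrix n n ℝ) :
    (Aᵀ * B).trace ≤ ∑ j, √((Aᵀ * A) j j) * √((Bᵀ * B) j j) :=
  Finset.sum_le_sum fun j _ => by
    simpa only [diag_apply, mul_apply, transpose_apply, sq] using
      Real.sum_mul_le_sqrt_mul_sqrt Finset.univ (fun i => A i j) (fun i => B i j)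

lemma transpose_mul_self_diag_nonneg (A : Matrix n n ℝ) (j : n) : 0 ≤ (Aᵀ * A) j j :=
  Finset.sum_nonneg fun i _ => mul_self_nonneg (A i j)

variable [DecidableEq n]

lemma trace_transpose_mul_le_frobNormR_mul (A B : Matrix n n ℝ) :
    (Aᵀ * B).trace ≤ frobNormR A * frobNormR B :=
  (trace_transpose_mul_le_sum_sqrt_diag A B).trans <| Real.sum_sqrt_mul_sqrt_le _
    (transpose_mul_self_diag_nonneg A) (transpose_mul_self_diag_nonneg B)

lemma frobNormR_transpose (A : Matrix n n ℝ) : frobNormR Aᵀ = frobNormR A := by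
  rw [frobNormR, frobNormR, transpose_transpose, trace_mul_comm]

lemma frobNormR_orthogonal_mul {O : Matrix n n ℝ} (hO : Oᵀ * O = 1) (A : Matrix n n ℝ) :
    frobNormR (O * A) = frobNormR A := by
  rw [frobNormR, frobNormR, transpose_mul, Matrix.mul_assoc, ← Matrix.mul_assoc Oᵀ, hO,
    Matrix.one_mul]

lemma frobNormR_smul (c : ℝ) (A : Matrix n n ℝ) : frobNormR (c • A) = |c| * frobNormR A := by
  rw [frobNormR, frobNormR, transpose_smul, smul_mul_smul_comm, trace_smul, smul_eq_mul,
    Real.sqrt_mul (mul_self_nonneg c), Real.sqrt_mul_self_eq_abs]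

lemma frobNormR_of_isIdempotentElem {P : Matrix n n ℝ} (hsym : Pᵀ = P) (hP : IsIdempotentElem P) :
    frobNormR P = √P.rank := by
  rw [frobNormR, hsym, hP.eq, trace_eq_rank_of_isIdempotentElem hP]

variable {Q : Matrix n n ℝ}

lemma posSemidef_transpose_mul_self_sub_of_contraction (hQ : (1 - Qᵀ * Q).PosSemidef)
    (A : Matrix n n ℝ) : (Aᵀ * A - (Q * A)ᵀ * (Q * A)).PosSemidef := by
  simpa [Matrix.mul_sub, Matrix.sub_mul, Matrix.mul_assoc] using hQ.conjTranspose_mul_mul_same A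

lemma frobNormR_contraction_mul_le (hQ : (1 - Qᵀ * Q).PosSemidef) (A : Matrix n n ℝ) :
    frobNormR (Q * A) ≤ frobNormR A :=
  Real.sqrt_le_sqrt <| sub_nonneg.1 <| by
    simpa [trace_sub] using (posSemidef_transpose_mul_self_sub_of_contraction hQ A).trace_nonneg

end Frobenius

section TraceNorm

variable {n : Type*} [Fintype n] [DecidableEq n]

def rightSingularVectors (X : Matrix n n ℝ) : Matrix n n ℝ :=
  (posSemidef_conjTranspose_mul_self X).1.eigenvectorUnitary

def sqSingularValues (X : Matrix n n ℝ) : n → ℝ :=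
  (posSemidef_conjTranspose_mul_self X).1.eigenvalues

lemma rightSingularVectors_transpose_mul (X : Matrix n n ℝ) :
    (rightSingularVectors X)ᵀ * rightSingularVectors X = 1 := by
  simpa [rightSingularVectors, star_eq_conjTranspose] using Unitary.coe_star_mul_self
    (posSemidef_conjTranspose_mul_self X).1.eigenvectorUnitary

lemma rightSingularVectors_mul_transpose (X : Matrix n n ℝ) :
    rightSingularVectors X * (rightSingularVectors X)ᵀ = 1 := by
  simpa [rightSingularVectors, star_eq_conjTranspose] using Unitary.coe_mul_star_self
    (posSemidef_conjTranspose_mul_self X).1.eigenvectorUnitary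

lemma mul_rightSingularVectors_transpose_mul_self (X : Matrix n n ℝ) :
    (X * rightSingularVectors X)ᵀ * (X * rightSingularVectors X) =
      diagonal (sqSingularValues X) := by
  have h := (posSemidef_conjTranspose_mul_self X).1.conjStarAlgAut_star_eigenvectorUnitary
  rw [Unitary.conjStarAlgAut_star_apply] at h
  simpa [rightSingularVectors, sqSingularValues, star_eq_conjTranspose, Matrix.mul_assoc] using h

lemma traceNormR_eq_sum_sqrt (X : Matrix n n ℝ) :
    traceNormR X = ∑ j, √(sqSingularValues X j) := by
  rw [traceNormR, trace_mul_cycle, Unitary.coe_star_mul_self, one_mul, trace_diagonal]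
  rfl

lemma trace_transpose_mul_le_traceNormR {Q : Matrix n n ℝ} (hQ : (1 - Qᵀ * Q).PosSemidef)
    (X : Matrix n n ℝ) : (Qᵀ * X).trace ≤ traceNormR X := by
  set V := rightSingularVectors X
  calc (Qᵀ * X).trace = ((Q * V)ᵀ * (X * V)).trace := by
        rw [transpose_mul, Matrix.mul_assoc, trace_mul_comm Vᵀ, Matrix.mul_assoc,
          Matrix.mul_assoc, rightSingularVectors_mul_transpose, Matrix.mul_one]
    _ ≤ ∑ j, √(((Q * V)ᵀ * (Q * V)) j j) * √(((X * V)ᵀ * (X * V)) j j) :=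
      trace_transpose_mul_le_sum_sqrt_diag _ _
    _ ≤ ∑ j, √((Vᵀ * V) j j) * √(((X * V)ᵀ * (X * V)) j j) := by
      gcongr with j
      exact sub_nonneg.1 (posSemidef_transpose_mul_self_sub_of_contraction hQ V).diag_nonneg
    _ = traceNormR X := by
      simp only [V, rightSingularVectors_transpose_mul, mul_rightSingularVectors_transpose_mul_self,
        one_apply_eq, diagonal_apply_eq, Real.sqrt_one, one_mul, traceNormR_eq_sum_sqrt]

lemma exists_contraction_trace_transpose_mul_eq_traceNormR (X : Matrix n n ℝ) :
    ∃ Q : Matrix n n ℝ, (1 - Qᵀ * Q).PosSemidef ∧ (Qᵀ * X).trace = traceNormR X := by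
  set V := rightSingularVectors X
  set μ := sqSingularValues X
  -- `X V D Vᵀ` is the polar factor of `X`; as `(√0)⁻¹ = 0`, it vanishes on the kernel of `X`.
  set D : Matrix n n ℝ := diagonal fun j => (√(μ j))⁻¹
  have hDμ : D * diagonal μ = diagonal fun j => √(μ j) := by
    simp only [D, diagonal_mul_diagonal, inv_mul_eq_div, Real.div_sqrt]
  refine ⟨X * V * D * Vᵀ, ?_, ?_⟩
  · have hD : 1 - D * diagonal μ * D = diagonal fun j => 1 - √(μ j) * (√(μ j))⁻¹ := by
      rw [hDμ, diagonal_mul_diagonal, ← diagonal_one, diagonal_sub]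
    have hsub : 1 - (X * V * D * Vᵀ)ᵀ * (X * V * D * Vᵀ) = V * (1 - D * diagonal μ * D) * Vᵀ := by
      rw [Matrix.mul_sub, Matrix.sub_mul, Matrix.mul_one, rightSingularVectors_mul_transpose,
        ← mul_rightSingularVectors_transpose_mul_self]
      simp only [transpose_mul, transpose_transpose, D, diagonal_transpose, Matrix.mul_assoc]
      rfl
    rw [hsub, hD]
    simpa using
      (PosSemidef.diagonal fun j => sub_nonneg.2 mul_inv_le_one).mul_mul_conjTranspose_same V
  · calc ((X * V * D * Vᵀ)ᵀ * X).trace = (D * ((X * V)ᵀ * (X * V))).trace := by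
          simp only [transpose_mul, transpose_transpose, D, diagonal_transpose, Matrix.mul_assoc]
          rw [trace_mul_comm]
          simp only [Matrix.mul_assoc]
      _ = ∑ j, √(μ j) := by
          rw [mul_rightSingularVectors_transpose_mul_self, hDμ, trace_diagonal]
      _ = traceNormR X := (traceNormR_eq_sum_sqrt X).symm

lemma traceNormR_add_le (A B : Matrix n n ℝ) :
    traceNormR (A + B) ≤ traceNormR A + traceNormR B := by
  obtain ⟨Q, hQ, hQAB⟩ := exists_contraction_trace_transpose_mul_eq_traceNormR (A + B)
  rw [← hQAB, Matrix.mul_add, trace_add]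
  exact add_le_add (trace_transpose_mul_le_traceNormR hQ A)
    (trace_transpose_mul_le_traceNormR hQ B)

lemma traceNormR_neg (X : Matrix n n ℝ) : traceNormR (-X) = traceNormR X := by
  have neg_le : ∀ Y : Matrix n n ℝ, traceNormR (-Y) ≤ traceNormR Y := fun Y => by
    obtain ⟨Q, hQ, hQY⟩ := exists_contraction_trace_transpose_mul_eq_traceNormR (-Y)
    rw [← hQY, Matrix.mul_neg, ← Matrix.neg_mul, ← transpose_neg]
    exact trace_transpose_mul_le_traceNormR (by simpa using hQ) Y
  exact le_antisymm (neg_le X) (by simpa using neg_le (-X))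

lemma abs_traceNormR_sub_traceNormR_le (X Y : Matrix n n ℝ) :
    |traceNormR X - traceNormR Y| ≤ traceNormR (X - Y) := by
  have hX := traceNormR_add_le (X - Y) Y
  have hY := traceNormR_add_le (Y - X) X
  rw [sub_add_cancel] at hX
  rw [sub_add_cancel, ← neg_sub, traceNormR_neg] at hY
  exact abs_sub_le_iff.2 ⟨by linarith, by linarith⟩

lemma traceNormR_mul_le_frobNormR_mul (A B : Matrix n n ℝ) :
    traceNormR (A * B) ≤ frobNormR A * frobNormR B := by
  obtain ⟨Q, hQ, hQAB⟩ := exists_contraction_trace_transpose_mul_eq_traceNormR (A * B)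
  calc traceNormR (A * B) = (Aᵀ * (Q * Bᵀ)).trace := by
        rw [← hQAB, ← trace_transpose, transpose_mul, transpose_mul, transpose_transpose,
          Matrix.mul_assoc, trace_mul_comm, Matrix.mul_assoc]
    _ ≤ frobNormR A * frobNormR (Q * Bᵀ) := trace_transpose_mul_le_frobNormR_mul _ _
    _ ≤ frobNormR A * frobNormR B := by
        rw [← frobNormR_transpose B]
        gcongr
        · exact Real.sqrt_nonneg _
        · exact frobNormR_contraction_mul_le hQ _

end TraceNorm

theorem trace_distance_rotation_lipschitz_general
    {d r : ℕ}
    (Pj : Matrix (Fin d) (Fin d) ℝ)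
    (hsym : Pjᵀ = Pj) (hproj : Pj * Pj = Pj) (hrank : Pj.rank = r)
    (M O O' : Matrix (Fin d) (Fin d) ℝ)
    (hO : Oᵀ * O = 1) (hO' : O'ᵀ * O' = 1) :
    |traceNormR (M - O' * ((r : ℝ)⁻¹ • Pj) * O'ᵀ) -
        traceNormR (M - O * ((r : ℝ)⁻¹ • Pj) * Oᵀ)| ≤
      (4 / Real.sqrt r) * frobNormR (O' - O) := by
  set ρ := (r : ℝ)⁻¹ • Pj
  have hρ : frobNormR ρ = (√r)⁻¹ := by
    rw [frobNormR_smul, frobNormR_of_isIdempotentElem hsym hproj, hrank, abs_inv, Nat.abs_cast,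
      inv_mul_eq_div, Real.sqrt_div_self', one_div]
  have hρO' : frobNormR (ρ * O'ᵀ) = (√r)⁻¹ := by
    rw [← frobNormR_transpose, transpose_mul, transpose_transpose, frobNormR_orthogonal_mul hO',
      frobNormR_transpose, hρ]
  have hOρ : frobNormR (O * ρ) = (√r)⁻¹ := by rw [frobNormR_orthogonal_mul hO, hρ]
  have hdecomp : O' * ρ * O'ᵀ - O * ρ * Oᵀ = (O' - O) * (ρ * O'ᵀ) + O * ρ * (O' - O)ᵀ := by
    simp only [transpose_sub, Matrix.sub_mul, Matrix.mul_sub, Matrix.mul_assoc]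
    abel
  calc _ ≤ traceNormR (O' * ρ * O'ᵀ - O * ρ * Oᵀ) := by
        rw [abs_sub_comm]
        simpa using abs_traceNormR_sub_traceNormR_le (M - O * ρ * Oᵀ) (M - O' * ρ * O'ᵀ)
    _ ≤ frobNormR (O' - O) * frobNormR (ρ * O'ᵀ) + frobNormR (O * ρ) * frobNormR (O' - O)ᵀ := by
        rw [hdecomp]
        exact (traceNormR_add_le _ _).trans (add_le_add (traceNormR_mul_le_frobNormR_mul _ _)
          (traceNormR_mul_le_frobNormR_mul _ _))
    _ = 2 / √r * frobNormR (O' - O) := by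
        rw [hρO', hOρ, frobNormR_transpose]
        ring
    _ ≤ 4 / √r * frobNormR (O' - O) := by
        gcongr
        · exact Real.sqrt_nonneg _
        · norm_num

/-- **Lipschitz bound for the trace-norm distance to a rotated low-rank
projection** (from the proof of Lemma 5 of "Quantum Tomography via Compressed
Sensing").

For `ρ₀ = Π/r` a normalized rank-`r` projection and any matrix `M`, the map
`O ↦ ‖M - O ρ₀ Oᵀ‖_tr` is `4/√r`-Lipschitz on the orthogonal group in the
Frobenius norm. -/
theorem trace_distance_rotation_lipschitz
    {d r : ℕ} (hr : 1 ≤ r)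
    (Pj : Matrix (Fin d) (Fin d) ℝ)
    (hsym : Pjᵀ = Pj) (hproj : Pj * Pj = Pj) (hrank : Pj.rank = r)
    (M O O' : Matrix (Fin d) (Fin d) ℝ)
    (hO : Oᵀ * O = 1) (hO' : O'ᵀ * O' = 1) :
    |traceNormR (M - O' * ((r : ℝ)⁻¹ • Pj) * O'ᵀ) -
        traceNormR (M - O * ((r : ℝ)⁻¹ • Pj) * Oᵀ)| ≤
      (4 / Real.sqrt r) * frobNormR (O' - O) :=
  trace_distance_rotation_lipschitz_general Pj hsym hproj hrank M O O' hO hO'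
end
end

section
/- Let r ≥ 1, let φ₁, …, φ_r be orthonormal vectors in ℂ^d, let λ₁, …, λ_r ≥ 0 with Σ_j λ_j ≤ 1, and let ρ be a d×d positive semidefinite Hermitian matrix. Define G = Σ_{j,k=1}^r √(λ_j λ_k)·⟨φ_j, ρ φ_k⟩·|φ_j⟩⟨φ_k| (equivalently G = √ρ̂·ρ·√ρ̂ for ρ̂ = Σ_j λ_j |φ_j⟩⟨φ_j|). Let ε₀ > 0 and let (ε_{jk})_{j,k=1}^r be complex numbers with ε_{kj} = conj(ε_{jk}) and |ε_{jk}| ≤ ε₀ for all j, k, and define the Hermitian matrix E = Σ_{j,k=1}^r √(λ_j λ_k)·ε_{jk}·|φ_j⟩⟨φ_k|. Then | Tr√G − Tr√([G + E]₊) | ≤ r^{3/4}·√(2ε₀), where [·]₊ denotes the positive part of a Hermitian matrix. -/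
open scoped ComplexOrder Matrix BigOperators Kronecker
open MeasureTheory

noncomputable section

/-- Trace norm of a complex square matrix: `Tr √(XᴴX)`. -/
def traceNorm {ι : Type*} [Fintype ι] [DecidableEq ι] (X : Matrix ι ι ℂ) : ℝ :=
  ((((Matrix.posSemidef_conjTranspose_mul_self X).1.eigenvectorUnitary : Matrix ι ι ℂ) *
    Matrix.diagonal (fun i => ((Real.sqrt
      ((Matrix.posSemidef_conjTranspose_mul_self X).1.eigenvalues i) : ℝ) : ℂ)) *
    (star (Matrix.posSemidef_conjTranspose_mul_self X).1.eigenvectorUnitary :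
      Matrix ι ι ℂ)).trace).re

/-- Frobenius norm `√(Tr(XᴴX))`. -/
def frobNorm {ι : Type*} [Fintype ι] [DecidableEq ι] (X : Matrix ι ι ℂ) : ℝ :=
  Real.sqrt ((Xᴴ * X).trace).re

/-- Operator norm (largest singular value), realized as the norm of the induced
continuous linear map on Euclidean space. -/
def opNorm {ι : Type*} [Fintype ι] [DecidableEq ι] (X : Matrix ι ι ℂ) : ℝ :=
  ‖Matrix.toEuclideanCLM (𝕜 := ℂ) X‖

/-- Euclidean norm on `ℝ^m`. -/
def l2norm {m : ℕ} (z : Fin m → ℝ) : ℝ :=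
  Real.sqrt (∑ i, (z i) ^ 2)

open Classical in
/-- The positive part `[H]₊` of a Hermitian matrix (junk value `0` otherwise). -/
def matPosPart {ι : Type*} [Fintype ι] [DecidableEq ι] (H : Matrix ι ι ℂ) :
    Matrix ι ι ℂ :=
  if h : H.IsHermitian then
    (h.eigenvectorUnitary : Matrix ι ι ℂ) *
      Matrix.diagonal (fun i => ((max (h.eigenvalues i) 0 : ℝ) : ℂ)) *
      (star h.eigenvectorUnitary : Matrix ι ι ℂ)
  else 0

open Classical in
/-- The positive semidefinite square root of a positive semidefinite matrix
(junk value `0` otherwise). -/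
def psdSqrt {ι : Type*} [Fintype ι] [DecidableEq ι] (A : Matrix ι ι ℂ) :
    Matrix ι ι ℂ :=
  if h : A.PosSemidef then
    (h.1.eigenvectorUnitary : Matrix ι ι ℂ) *
      Matrix.diagonal (fun i => ((Real.sqrt (h.1.eigenvalues i) : ℝ) : ℂ)) *
      (star h.1.eigenvectorUnitary : Matrix ι ι ℂ)
  else 0

/-!
Let `V` be the isometry whose columns are the `φ_j`. Then `G = V G̃ Vᴴ` and `E = V Ẽ Vᴴ` for
`r × r` matrices `G̃ ⪰ 0` and `Ẽ` Hermitian, and square roots, positive parts and traces commute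
with such compressions, so everything happens in dimension `r`. There, with `M = [G̃ + Ẽ]₊`,
Cauchy–Schwarz and the Powers–Størmer inequality `‖√A - √B‖₂² ≤ ‖A - B‖₁` give
`|Tr √G̃ - Tr √M| ≤ √r ‖√G̃ - √M‖₂ ≤ √r ‖G̃ - M‖₁^{1/2}`. Since `G̃ - M = -Ẽ - [G̃ + Ẽ]₋` and
`Tr [G̃ + Ẽ]₋ ≤ ‖Ẽ‖₁`, this is at most `√(2r ‖Ẽ‖₁)`; finally `‖Ẽ‖₁ ≤ √r ‖Ẽ‖₂ ≤ √r ε₀`, the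
entries of `Ẽ` being bounded by `√(λ_j λ_k) ε₀` with `∑ λ_j ≤ 1`.
-/

open Matrix
open scoped MatrixOrder

variable {n : Type*} [Fintype n]

namespace Matrix

lemma PosSemidef.re_diag_conj_nonneg {m : Type*} [Fintype m] {A : Matrix n n ℂ}
    (hA : A.PosSemidef) (W : Matrix n m ℂ) (i : m) : 0 ≤ ((Wᴴ * A * W) i i).re :=
  (Complex.nonneg_iff.mp (hA.conjTranspose_mul_mul_same W).diag_nonneg).1

lemma IsHermitian.posSemidef_mul_self {H : Matrix n n ℂ}
    (hH : H.IsHermitian) : (H * H).PosSemidef := by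
  simpa only [hH.eq] using posSemidef_conjTranspose_mul_self H

variable [DecidableEq n]

lemma IsHermitian.trace_cfc {H : Matrix n n ℂ} (hH : H.IsHermitian) (f : ℝ → ℝ) :
    (cfc f H).trace = ∑ i, ((f (hH.eigenvalues i) : ℝ) : ℂ) := by
  rw [hH.cfc_eq, IsHermitian.cfc, Unitary.conjStarAlgAut_apply, trace_mul_cycle,
    Unitary.coe_star_mul_self, one_mul, trace_diagonal]
  rfl

lemma posSemidef_cfc (H : Matrix n n ℂ) {f : ℝ → ℝ} (hf : ∀ x, 0 ≤ f x) :
    (cfc f H).PosSemidef :=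
  nonneg_iff_posSemidef.mp (cfc_nonneg fun x _ => hf x)

lemma IsHermitian.exists_unitary_conj_eq_diagonal {H : Matrix n n ℂ} (hH : H.IsHermitian) :
    ∃ W : Matrix n n ℂ, W * Wᴴ = 1 ∧ Wᴴ * H * W = diagonal fun i => (hH.eigenvalues i : ℂ) :=
  ⟨hH.eigenvectorUnitary, Unitary.coe_mul_star_self _, by
    simpa [star_eq_conjTranspose, Function.comp_def] using
      hH.conjStarAlgAut_star_eigenvectorUnitary⟩

end Matrix

variable [DecidableEq n]

lemma psdSqrt_eq_sqrt {A : Matrix n n ℂ} (hA : A.PosSemidef) : psdSqrt A = CFC.sqrt A := by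
  rw [CFC.sqrt_eq_real_sqrt A hA.nonneg, cfcₙ_eq_cfc (hf0 := Real.sqrt_zero), hA.1.cfc_eq,
    psdSqrt, dif_pos hA]
  rfl

lemma posSemidef_psdSqrt {A : Matrix n n ℂ} (hA : A.PosSemidef) : (psdSqrt A).PosSemidef := by
  rw [psdSqrt_eq_sqrt hA, ← nonneg_iff_posSemidef]
  exact CFC.sqrt_nonneg A

lemma psdSqrt_mul_psdSqrt {A : Matrix n n ℂ} (hA : A.PosSemidef) : psdSqrt A * psdSqrt A = A := by
  rw [psdSqrt_eq_sqrt hA]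
  exact CFC.sqrt_mul_sqrt_self A hA.nonneg

lemma psdSqrt_eq_of_mul_self {A B : Matrix n n ℂ} (hB : B.PosSemidef) (h : B * B = A) :
    psdSqrt A = B := by
  have hA : A.PosSemidef := h ▸ hB.1.posSemidef_mul_self
  rw [psdSqrt_eq_sqrt hA]
  exact CFC.sqrt_unique h hB.nonneg

lemma Matrix.IsHermitian.psdSqrt_mul_self_eq_cfc_abs {H : Matrix n n ℂ} (hH : H.IsHermitian) :
    psdSqrt (H * H) = cfc (fun x : ℝ => |x|) H := by
  refine psdSqrt_eq_of_mul_self (posSemidef_cfc H abs_nonneg) ?_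
  rw [← cfc_mul (fun x : ℝ => |x|) (fun x : ℝ => |x|) H]
  simp_rw [abs_mul_abs_self]
  rw [cfc_mul (fun x : ℝ => x) (fun x => x) H, cfc_id' ℝ H]

lemma matPosPart_eq_cfc {H : Matrix n n ℂ} (hH : H.IsHermitian) :
    matPosPart H = cfc (fun x : ℝ => max x 0) H := by
  rw [hH.cfc_eq, matPosPart, dif_pos hH]
  rfl

lemma posSemidef_matPosPart {H : Matrix n n ℂ} (hH : H.IsHermitian) :
    (matPosPart H).PosSemidef := by
  rw [matPosPart_eq_cfc hH]
  exact posSemidef_cfc H fun x => le_max_right x 0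

lemma Matrix.IsHermitian.matPosPart_add_matPosPart {H : Matrix n n ℂ} (hH : H.IsHermitian) :
    matPosPart H + matPosPart H = psdSqrt (H * H) + H := by
  have h : (fun x : ℝ => max x 0 + max x 0) = fun x => |x| + id x := by
    ext x; rcases le_total x 0 with hx | hx <;> simp [hx, abs_of_nonpos, abs_of_nonneg]
  rw [matPosPart_eq_cfc hH, hH.psdSqrt_mul_self_eq_cfc_abs, ← cfc_add .., h, cfc_add .., cfc_id ℝ H]

lemma Matrix.IsHermitian.matPosPart_sub_self {H : Matrix n n ℂ} (hH : H.IsHermitian) :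
    matPosPart H - H = cfc (fun x : ℝ => max (-x) 0) H := by
  have h : (fun x : ℝ => max (-x) 0) = fun x => max x 0 - id x := by
    ext x; rcases le_total x 0 with hx | hx <;> simp [hx]
  rw [matPosPart_eq_cfc hH, h, cfc_sub .., cfc_id ℝ H]

section Isometry

variable {m : Type*} [Fintype m] {V : Matrix m n ℂ}

lemma trace_conj_isometry (hV : Vᴴ * V = 1) (X : Matrix n n ℂ) :
    (V * X * Vᴴ).trace = X.trace := by
  rw [trace_mul_cycle, hV, one_mul]

lemma conj_isometry_mul (hV : Vᴴ * V = 1) (X Y : Matrix n n ℂ) :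
    V * X * Vᴴ * (V * Y * Vᴴ) = V * (X * Y) * Vᴴ := by
  simp only [Matrix.mul_assoc]
  rw [← Matrix.mul_assoc Vᴴ, hV, Matrix.one_mul]

lemma psdSqrt_conj_isometry [DecidableEq m] (hV : Vᴴ * V = 1) {A : Matrix n n ℂ}
    (hA : A.PosSemidef) :
    psdSqrt (V * A * Vᴴ) = V * psdSqrt A * Vᴴ :=
  psdSqrt_eq_of_mul_self ((posSemidef_psdSqrt hA).mul_mul_conjTranspose_same V)
    (by rw [conj_isometry_mul hV, psdSqrt_mul_psdSqrt hA])

lemma matPosPart_conj_isometry [DecidableEq m] (hV : Vᴴ * V = 1) {H : Matrix n n ℂ}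
    (hH : H.IsHermitian) :
    matPosPart (V * H * Vᴴ) = V * matPosPart H * Vᴴ := by
  have hVH : (V * H * Vᴴ).IsHermitian := isHermitian_mul_mul_conjTranspose V hH
  have h : matPosPart (V * H * Vᴴ) + matPosPart (V * H * Vᴴ) =
      V * matPosPart H * Vᴴ + V * matPosPart H * Vᴴ := by
    rw [hVH.matPosPart_add_matPosPart, conj_isometry_mul hV,
      psdSqrt_conj_isometry hV hH.posSemidef_mul_self,
      ← Matrix.add_mul, ← Matrix.mul_add, ← hH.matPosPart_add_matPosPart,
      Matrix.mul_add, Matrix.add_mul]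
  exact smul_right_injective _ (two_ne_zero' ℂ) (by simpa only [two_smul] using h)

end Isometry

lemma traceNorm_eq_re_trace_psdSqrt (X : Matrix n n ℂ) :
    traceNorm X = (psdSqrt (Xᴴ * X)).trace.re := by
  rw [psdSqrt, dif_pos (posSemidef_conjTranspose_mul_self X)]
  rfl

lemma traceNorm_neg (X : Matrix n n ℂ) : traceNorm (-X) = traceNorm X := by
  rw [traceNorm_eq_re_trace_psdSqrt, traceNorm_eq_re_trace_psdSqrt, conjTranspose_neg,
    neg_mul_neg]

lemma frobNorm_eq_sqrt_sum_norm_sq (X : Matrix n n ℂ) :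
    frobNorm X = √(∑ i, ∑ j, ‖X i j‖ ^ 2) := by
  rw [frobNorm, Finset.sum_comm, trace, Complex.re_sum]
  congr 1
  refine Finset.sum_congr rfl fun j _ => ?_
  simp [mul_apply, Complex.re_sum, ← Complex.normSq_eq_norm_sq, Complex.normSq_apply]

namespace Matrix.IsHermitian

variable {H : Matrix n n ℂ} (hH : H.IsHermitian)
include hH

lemma traceNorm_eq_re_trace_cfc_abs : traceNorm H = (cfc (fun x : ℝ => |x|) H).trace.re := by
  rw [traceNorm_eq_re_trace_psdSqrt, hH.eq, hH.psdSqrt_mul_self_eq_cfc_abs]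

lemma traceNorm_eq_sum_abs_eigenvalues : traceNorm H = ∑ i, |hH.eigenvalues i| := by
  simp [hH.traceNorm_eq_re_trace_cfc_abs, hH.trace_cfc]

lemma frobNorm_eq_sqrt_sum_sq_eigenvalues : frobNorm H = √(∑ i, hH.eigenvalues i ^ 2) := by
  have h : H * H = cfc (fun x : ℝ => x ^ 2) H := by rw [cfc_pow .., cfc_id' ℝ H, sq]
  simp only [frobNorm, hH.eq, h, hH.trace_cfc, Complex.re_sum]
  norm_cast

lemma abs_re_trace_le_traceNorm : |H.trace.re| ≤ traceNorm H := by
  rw [hH.trace_eq_sum_eigenvalues, hH.traceNorm_eq_sum_abs_eigenvalues]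
  simpa using Finset.abs_sum_le_sum_abs (fun i => hH.eigenvalues i) Finset.univ

lemma traceNorm_le_sqrt_card_mul_frobNorm :
    traceNorm H ≤ √(Fintype.card n) * frobNorm H := by
  rw [hH.traceNorm_eq_sum_abs_eigenvalues, hH.frobNorm_eq_sqrt_sum_sq_eigenvalues]
  simpa using Real.sum_mul_le_sqrt_mul_sqrt Finset.univ (fun _ => 1) (fun i => |hH.eigenvalues i|)

lemma abs_re_diag_conj_le {m : Type*} [Fintype m] (W : Matrix n m ℂ) (i : m) :
    |((Wᴴ * H * W) i i).re| ≤ ((Wᴴ * cfc (fun x : ℝ => |x|) H * W) i i).re := by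
  have hsub : cfc (fun x : ℝ => |x| - x) H = cfc (fun x : ℝ => |x|) H - H := by
    rw [cfc_sub .., cfc_id' ℝ H]
  have hadd : cfc (fun x : ℝ => |x| + x) H = cfc (fun x : ℝ => |x|) H + H := by
    rw [cfc_add .., cfc_id' ℝ H]
  have h₁ := (posSemidef_cfc H fun x => sub_nonneg.mpr (le_abs_self x)).re_diag_conj_nonneg W i
  have h₂ := (posSemidef_cfc H (f := fun x => |x| + x) fun x =>
    neg_le_iff_add_nonneg'.mp (neg_abs_le x)).re_diag_conj_nonneg W i
  rw [hsub, Matrix.mul_sub, Matrix.sub_mul, sub_apply, Complex.sub_re] at h₁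
  rw [hadd, Matrix.mul_add, Matrix.add_mul, add_apply, Complex.add_re] at h₂
  exact abs_le.mpr ⟨by linarith, by linarith⟩

lemma sum_abs_re_diag_conj_le_traceNorm {W : Matrix n n ℂ} (hW : W * Wᴴ = 1) :
    ∑ i, |((Wᴴ * H * W) i i).re| ≤ traceNorm H := by
  calc ∑ i, |((Wᴴ * H * W) i i).re|
      ≤ ∑ i, ((Wᴴ * cfc (fun x : ℝ => |x|) H * W) i i).re :=
        Finset.sum_le_sum fun i _ => hH.abs_re_diag_conj_le W i
    _ = (Wᴴ * cfc (fun x : ℝ => |x|) H * W).trace.re := by simp only [trace, diag, Complex.re_sum]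
    _ = traceNorm H := by
        rw [trace_mul_cycle, hW, Matrix.one_mul, hH.traceNorm_eq_re_trace_cfc_abs]

end Matrix.IsHermitian

lemma Matrix.IsHermitian.traceNorm_add_le {X Y : Matrix n n ℂ} (hX : X.IsHermitian)
    (hY : Y.IsHermitian) : traceNorm (X + Y) ≤ traceNorm X + traceNorm Y := by
  have hXY := hX.add hY
  obtain ⟨W, hW, hdiag⟩ := hXY.exists_unitary_conj_eq_diagonal
  calc traceNorm (X + Y) = ∑ i, |((Wᴴ * (X + Y) * W) i i).re| := by
        simp [hdiag, hXY.traceNorm_eq_sum_abs_eigenvalues]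
    _ ≤ ∑ i, (|((Wᴴ * X * W) i i).re| + |((Wᴴ * Y * W) i i).re|) :=
        Finset.sum_le_sum fun i _ => by
          rw [Matrix.mul_add, Matrix.add_mul, add_apply, Complex.add_re]
          exact abs_add_le _ _
    _ ≤ traceNorm X + traceNorm Y := by
        rw [Finset.sum_add_distrib]
        exact add_le_add (hX.sum_abs_re_diag_conj_le_traceNorm hW)
          (hY.sum_abs_re_diag_conj_le_traceNorm hW)

lemma Matrix.PosSemidef.traceNorm_eq {N : Matrix n n ℂ} (hN : N.PosSemidef) :
    traceNorm N = N.trace.re := by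
  rw [hN.1.traceNorm_eq_sum_abs_eigenvalues, hN.1.trace_eq_sum_eigenvalues]
  simp [abs_of_nonneg (hN.eigenvalues_nonneg _)]

lemma sq_sub_le_abs_sub_mul_add {p q : ℝ} (hp : 0 ≤ p) (hq : 0 ≤ q) :
    (p - q) ^ 2 ≤ |(p - q) * (p + q)| := by
  rw [abs_mul, abs_of_nonneg (add_nonneg hp hq), sq, ← abs_mul_abs_self]
  exact mul_le_mul_of_nonneg_left (abs_sub_le_iff.mpr ⟨by linarith, by linarith⟩) (abs_nonneg _)

lemma re_diag_conj_mul_self_sub_mul_self {P Q W : Matrix n n ℂ} (hW : W * Wᴴ = 1) {δ : n → ℝ}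
    (hδ : Wᴴ * (P - Q) * W = diagonal fun i => (δ i : ℂ)) (i : n) :
    ((Wᴴ * (P * P - Q * Q) * W) i i).re =
      δ i * (((Wᴴ * P * W) i i).re + ((Wᴴ * Q * W) i i).re) := by
  have hconj := conj_isometry_mul (V := Wᴴ) (by rwa [conjTranspose_conjTranspose])
  simp only [conjTranspose_conjTranspose] at hconj
  have hsplit : Wᴴ * (P * P - Q * Q) * W =
      Wᴴ * P * W * (Wᴴ * (P - Q) * W) + Wᴴ * (P - Q) * W * (Wᴴ * Q * W) := by
    rw [hconj, hconj, ← Matrix.add_mul, ← Matrix.mul_add]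
    congr 2
    noncomm_ring
  rw [hsplit, hδ, Matrix.add_apply, mul_diagonal, diagonal_mul]
  simp only [Complex.add_re, Complex.mul_re, Complex.ofReal_re, Complex.ofReal_im, mul_zero,
    sub_zero, zero_mul]
  ring

theorem frobNorm_sub_sq_le_traceNorm_mul_self_sub {P Q : Matrix n n ℂ} (hP : P.PosSemidef)
    (hQ : Q.PosSemidef) : frobNorm (P - Q) ^ 2 ≤ traceNorm (P * P - Q * Q) := by
  have hΔ : (P - Q).IsHermitian := hP.1.sub hQ.1
  obtain ⟨W, hW, hdiag⟩ := hΔ.exists_unitary_conj_eq_diagonal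
  have hδ (i : n) : hΔ.eigenvalues i = ((Wᴴ * P * W) i i).re - ((Wᴴ * Q * W) i i).re := by
    simpa [Matrix.mul_sub, Matrix.sub_mul] using congrArg (fun X => (X i i).re) hdiag.symm
  rw [hΔ.frobNorm_eq_sqrt_sum_sq_eigenvalues, Real.sq_sqrt (by positivity)]
  have hPQ := hP.1.posSemidef_mul_self.1.sub hQ.1.posSemidef_mul_self.1
  -- in an eigenbasis of `P - Q`: `δᵢ = pᵢ - qᵢ` and `(P² - Q²)ᵢᵢ = δᵢ (pᵢ + qᵢ)`, with `pᵢ, qᵢ ≥ 0`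
  refine le_trans (Finset.sum_le_sum fun i _ => ?_) (hPQ.sum_abs_re_diag_conj_le_traceNorm hW)
  rw [re_diag_conj_mul_self_sub_mul_self hW hdiag, hδ]
  exact sq_sub_le_abs_sub_mul_add (hP.re_diag_conj_nonneg W i) (hQ.re_diag_conj_nonneg W i)

lemma re_trace_matPosPart_sub_self_le_traceNorm {A E : Matrix n n ℂ} (hA : A.PosSemidef)
    (hE : E.IsHermitian) : (matPosPart (A + E) - (A + E)).trace.re ≤ traceNorm E := by
  have hAE := hA.1.add hE
  obtain ⟨W, hW, hdiag⟩ := hAE.exists_unitary_conj_eq_diagonal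
  rw [hAE.matPosPart_sub_self, hAE.trace_cfc, Complex.re_sum]
  refine le_trans (Finset.sum_le_sum fun i _ => ?_) (hE.sum_abs_re_diag_conj_le_traceNorm hW)
  have hμ : hAE.eigenvalues i = ((Wᴴ * A * W) i i).re + ((Wᴴ * E * W) i i).re := by
    simpa [Matrix.mul_add, Matrix.add_mul] using congrArg (fun X => (X i i).re) hdiag.symm
  rw [Complex.ofReal_re, hμ]
  have ha := hA.re_diag_conj_nonneg W i
  exact max_le (by linarith [neg_abs_le ((Wᴴ * E * W) i i).re]) (abs_nonneg _)

lemma traceNorm_sub_matPosPart_add_le {A E : Matrix n n ℂ} (hA : A.PosSemidef)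
    (hE : E.IsHermitian) : traceNorm (A - matPosPart (A + E)) ≤ 2 * traceNorm E := by
  have hAE := hA.1.add hE
  have hN : (matPosPart (A + E) - (A + E)).PosSemidef := by
    rw [hAE.matPosPart_sub_self]
    exact posSemidef_cfc _ fun x => le_max_right _ _
  rw [show A - matPosPart (A + E) = -(E + (matPosPart (A + E) - (A + E))) by abel,
    traceNorm_neg]
  calc _ ≤ traceNorm E + traceNorm (matPosPart (A + E) - (A + E)) := hE.traceNorm_add_le hN.1
    _ ≤ 2 * traceNorm E := by
        rw [hN.traceNorm_eq]
        linarith [re_trace_matPosPart_sub_self_le_traceNorm hA hE]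

theorem abs_re_trace_psdSqrt_sub_le {A E : Matrix n n ℂ} (hA : A.PosSemidef)
    (hE : E.IsHermitian) :
    |(psdSqrt A).trace.re - (psdSqrt (matPosPart (A + E))).trace.re| ≤
      √(Fintype.card n) * √(2 * traceNorm E) := by
  have hM := posSemidef_matPosPart (hA.1.add hE)
  have hP := posSemidef_psdSqrt hA
  have hQ := posSemidef_psdSqrt hM
  have hΔ := hP.1.sub hQ.1
  have hPS := frobNorm_sub_sq_le_traceNorm_mul_self_sub hP hQ
  rw [psdSqrt_mul_psdSqrt hA, psdSqrt_mul_psdSqrt hM] at hPS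
  calc _ = |(psdSqrt A - psdSqrt (matPosPart (A + E))).trace.re| := by
        rw [trace_sub, Complex.sub_re]
    _ ≤ traceNorm (psdSqrt A - psdSqrt (matPosPart (A + E))) := hΔ.abs_re_trace_le_traceNorm
    _ ≤ √(Fintype.card n) * frobNorm (psdSqrt A - psdSqrt (matPosPart (A + E))) :=
        hΔ.traceNorm_le_sqrt_card_mul_frobNorm
    _ ≤ √(Fintype.card n) * √(2 * traceNorm E) := by
        gcongr
        exact (le_abs_self _).trans <| Real.abs_le_sqrt <|
          hPS.trans (traceNorm_sub_matPosPart_add_le hA hE)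

theorem abs_re_trace_psdSqrt_conj_isometry_sub_le {m : Type*} [Fintype m] [DecidableEq m]
    {V : Matrix m n ℂ} (hV : Vᴴ * V = 1) {A E : Matrix n n ℂ} (hA : A.PosSemidef)
    (hE : E.IsHermitian) :
    |(psdSqrt (V * A * Vᴴ)).trace.re - (psdSqrt (matPosPart (V * A * Vᴴ + V * E * Vᴴ))).trace.re|
      ≤ √(Fintype.card n) * √(2 * traceNorm E) := by
  rw [← Matrix.add_mul, ← Matrix.mul_add, matPosPart_conj_isometry hV (hA.1.add hE),
    psdSqrt_conj_isometry hV hA, psdSqrt_conj_isometry hV (posSemidef_matPosPart (hA.1.add hE)),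
    trace_conj_isometry hV, trace_conj_isometry hV]
  exact abs_re_trace_psdSqrt_sub_le hA hE

section Compression

variable {ι m : Type*}

lemma sum_smul_vecMulVec_eq_mul_mul_conjTranspose [Fintype ι] (φ : ι → m → ℂ) (c : ι → ι → ℂ) :
    ∑ j, ∑ k, c j k • vecMulVec (φ j) (star (φ k)) = (of φ)ᵀ * of c * (of φ)ᵀᴴ := by
  ext a b
  simp only [Matrix.sum_apply, Matrix.smul_apply, vecMulVec_apply, smul_eq_mul, mul_apply,
    transpose_apply, conjTranspose_apply, of_apply, Finset.sum_mul, Pi.star_apply]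
  rw [Finset.sum_comm]
  refine Finset.sum_congr rfl fun k _ => Finset.sum_congr rfl fun j _ => ?_
  ring

lemma conjTranspose_mul_self_eq_one_of_orthonormal [Fintype m] [DecidableEq ι] {φ : ι → m → ℂ}
    (h : ∀ j k, star (φ j) ⬝ᵥ φ k = if j = k then 1 else 0) : (of φ)ᵀᴴ * (of φ)ᵀ = 1 := by
  ext j k
  simpa [mul_apply, one_apply, dotProduct] using h j k

lemma Matrix.PosSemidef.posSemidef_of_dotProduct_mulVec [Fintype ι] [Fintype m] {ρ : Matrix m m ℂ}
    (hρ : ρ.PosSemidef) (φ : ι → m → ℂ) : (of fun j k => star (φ j) ⬝ᵥ ρ *ᵥ φ k).PosSemidef := by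
  convert hρ.conjTranspose_mul_mul_same (of φ)ᵀ using 1
  ext j k
  simp only [of_apply, mul_apply, conjTranspose_apply, transpose_apply, dotProduct, mulVec,
    Pi.star_apply, Finset.sum_mul, Finset.mul_sum]
  rw [Finset.sum_comm]
  refine Finset.sum_congr rfl fun a _ => Finset.sum_congr rfl fun b _ => ?_
  ring

variable [Fintype ι] [DecidableEq ι] {l : ι → ℝ}

lemma of_sqrt_mul_mul_eq_diagonal_mul_mul (hl : ∀ j, 0 ≤ l j) (c : ι → ι → ℂ) :
    (of fun j k => ((√(l j * l k) : ℝ) : ℂ) * c j k) =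
      (diagonal fun j => ((√(l j) : ℝ) : ℂ))ᴴ * of c * diagonal fun j => ((√(l j) : ℝ) : ℂ) := by
  ext j k
  simp [Real.sqrt_mul (hl j)]
  ring

lemma Matrix.PosSemidef.of_sqrt_mul_mul (hl : ∀ j, 0 ≤ l j) {c : ι → ι → ℂ}
    (hc : (of c).PosSemidef) : (of fun j k => ((√(l j * l k) : ℝ) : ℂ) * c j k).PosSemidef := by
  rw [of_sqrt_mul_mul_eq_diagonal_mul_mul hl]
  exact hc.conjTranspose_mul_mul_same _

lemma Matrix.IsHermitian.of_sqrt_mul_mul (hl : ∀ j, 0 ≤ l j) {c : ι → ι → ℂ}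
    (hc : (of c).IsHermitian) : (of fun j k => ((√(l j * l k) : ℝ) : ℂ) * c j k).IsHermitian := by
  rw [of_sqrt_mul_mul_eq_diagonal_mul_mul hl]
  exact isHermitian_conjTranspose_mul_mul _ hc

lemma frobNorm_of_sqrt_mul_mul_le (hl0 : ∀ j, 0 ≤ l j) (hl1 : ∑ j, l j ≤ 1) {ε₀ : ℝ}
    (hε₀ : 0 ≤ ε₀) {c : ι → ι → ℂ} (hc : ∀ j k, ‖c j k‖ ≤ ε₀) :
    frobNorm (of fun j k => ((√(l j * l k) : ℝ) : ℂ) * c j k) ≤ ε₀ := by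
  have hentry (j k : ι) : ‖((√(l j * l k) : ℝ) : ℂ) * c j k‖ ^ 2 ≤ l j * l k * ε₀ ^ 2 := by
    rw [norm_mul, mul_pow, Complex.norm_real, Real.norm_of_nonneg (Real.sqrt_nonneg _),
      Real.sq_sqrt (mul_nonneg (hl0 j) (hl0 k))]
    gcongr
    exacts [mul_nonneg (hl0 j) (hl0 k), hc j k]
  rw [frobNorm_eq_sqrt_sum_norm_sq, Real.sqrt_le_left hε₀]
  calc ∑ j, ∑ k, ‖((√(l j * l k) : ℝ) : ℂ) * c j k‖ ^ 2 ≤ ∑ j, ∑ k, l j * l k * ε₀ ^ 2 :=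
        Finset.sum_le_sum fun j _ => Finset.sum_le_sum fun k _ => hentry j k
    _ = (∑ j, l j) ^ 2 * ε₀ ^ 2 := by
        rw [sq (∑ j, l j), Finset.sum_mul_sum, Finset.sum_mul]
        simp only [Finset.sum_mul]
    _ ≤ ε₀ ^ 2 :=
        mul_le_of_le_one_left (sq_nonneg ε₀) (pow_le_one₀ (Finset.sum_nonneg fun j _ => hl0 j) hl1)

end Compression

theorem fidelity_estimate_perturbation_bound_general
    {d r : ℕ}
    (φ : Fin r → (Fin d → ℂ))
    (horth : ∀ j k, star (φ j) ⬝ᵥ φ k = if j = k then 1 else 0)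
    (l : Fin r → ℝ) (hl0 : ∀ j, 0 ≤ l j) (hl1 : ∑ j, l j ≤ 1)
    (ρ : Matrix (Fin d) (Fin d) ℂ) (hρ : ρ.PosSemidef)
    (ε₀ : ℝ) (hε₀ : 0 < ε₀)
    (e : Fin r → Fin r → ℂ)
    (hherm : ∀ j k, e k j = starRingEnd ℂ (e j k))
    (hbnd : ∀ j k, ‖e j k‖ ≤ ε₀)
    (G E : Matrix (Fin d) (Fin d) ℂ)
    (hG : G = ∑ j, ∑ k, ((Real.sqrt (l j * l k) : ℂ) *
      (star (φ j) ⬝ᵥ ρ *ᵥ φ k)) • Matrix.vecMulVec (φ j) (star (φ k)))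
    (hE : E = ∑ j, ∑ k, ((Real.sqrt (l j * l k) : ℂ) * e j k) •
      Matrix.vecMulVec (φ j) (star (φ k))) :
    |((psdSqrt G).trace).re - ((psdSqrt (matPosPart (G + E))).trace).re| ≤
      (r : ℝ) ^ ((3 : ℝ) / 4) * Real.sqrt (2 * ε₀) := by
  have he : (of e).IsHermitian := by
    ext j k
    simp [hherm j k]
  have hEt := he.of_sqrt_mul_mul hl0
  have hEt_norm := hEt.traceNorm_le_sqrt_card_mul_frobNorm.trans <|
    mul_le_mul_of_nonneg_left (frobNorm_of_sqrt_mul_mul_le hl0 hl1 hε₀.le hbnd) (Real.sqrt_nonneg _)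
  rw [hG, hE, sum_smul_vecMulVec_eq_mul_mul_conjTranspose,
    sum_smul_vecMulVec_eq_mul_mul_conjTranspose]
  refine (abs_re_trace_psdSqrt_conj_isometry_sub_le
    (conjTranspose_mul_self_eq_one_of_orthonormal horth)
    ((hρ.posSemidef_of_dotProduct_mulVec φ).of_sqrt_mul_mul hl0) hEt).trans ?_
  have hr0 : (0 : ℝ) ≤ r := r.cast_nonneg
  calc _ ≤ √r * √(2 * (√r * ε₀)) := by
        simp only [Fintype.card_fin] at hEt_norm ⊢
        gcongr
    _ = (r : ℝ) ^ ((3 : ℝ) / 4) * √(2 * ε₀) := by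
        rw [mul_left_comm, Real.sqrt_mul' _ (by positivity), ← mul_assoc, Real.sqrt_eq_rpow,
          Real.sqrt_eq_rpow, ← Real.rpow_mul hr0, ← Real.rpow_add' hr0 (by norm_num)]
        norm_num

/-- **Perturbation bound for the fidelity estimate** (core of Theorem 6 of
"Quantum Tomography via Compressed Sensing").

With `G = ∑_{j,k} √(λ_j λ_k) ⟨φ_j, ρ φ_k⟩ |φ_j⟩⟨φ_k|` and error matrix
`E = ∑_{j,k} √(λ_j λ_k) ε_{jk} |φ_j⟩⟨φ_k|` built from Hermitian-symmetric errors
with `|ε_{jk}| ≤ ε₀`, one has `|Tr √G - Tr √([G+E]₊)| ≤ r^(3/4) √(2ε₀)`. -/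
theorem fidelity_estimate_perturbation_bound
    {d r : ℕ} (hr : 1 ≤ r)
    (φ : Fin r → (Fin d → ℂ))
    (horth : ∀ j k, star (φ j) ⬝ᵥ φ k = if j = k then 1 else 0)
    (l : Fin r → ℝ) (hl0 : ∀ j, 0 ≤ l j) (hl1 : ∑ j, l j ≤ 1)
    (ρ : Matrix (Fin d) (Fin d) ℂ) (hρ : ρ.PosSemidef)
    (ε₀ : ℝ) (hε₀ : 0 < ε₀)
    (e : Fin r → Fin r → ℂ)
    (hherm : ∀ j k, e k j = starRingEnd ℂ (e j k))
    (hbnd : ∀ j k, ‖e j k‖ ≤ ε₀)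
    (G E : Matrix (Fin d) (Fin d) ℂ)
    (hG : G = ∑ j, ∑ k, ((Real.sqrt (l j * l k) : ℂ) *
      (star (φ j) ⬝ᵥ ρ *ᵥ φ k)) • Matrix.vecMulVec (φ j) (star (φ k)))
    (hE : E = ∑ j, ∑ k, ((Real.sqrt (l j * l k) : ℂ) * e j k) •
      Matrix.vecMulVec (φ j) (star (φ k))) :
    |((psdSqrt G).trace).re - ((psdSqrt (matPosPart (G + E))).trace).re| ≤
      (r : ℝ) ^ ((3 : ℝ) / 4) * Real.sqrt (2 * ε₀) :=
  fidelity_estimate_perturbation_bound_general φ horth l hl0 hl1 ρ hρ ε₀ hε₀ e hherm hbnd G E hG hE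
end
end

section
/- Let n ≥ 1, d = 2ⁿ, let {P_s : s ∈ {0,1,2,3}ⁿ} be the n-qubit Pauli matrices, let ρ be a d×d Hermitian matrix, and let φ, ψ be unit vectors in ℂ^d. Define the probability weights Pr(s) = |⟨φ, P_s ψ⟩|²/d (which sum to 1 since φ, ψ are unit vectors) and, on the support {s : ⟨ψ, P_s φ⟩ ≠ 0}, the estimator value X_s = Tr(P_s ρ)/⟨ψ, P_s φ⟩. Then: (i) the estimator is unbiased, Σ_{s : ⟨ψ,P_sφ⟩ ≠ 0} Pr(s)·X_s = ⟨φ, ρ ψ⟩; and (ii) its second moment satisfies Σ_{s : ⟨ψ,P_sφ⟩ ≠ 0} Pr(s)·|X_s|² ≤ Tr(ρ²). In particular, if Tr(ρ²) ≤ 1 then the variance of the estimator is at most 1. -/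
open scoped ComplexOrder Matrix BigOperators Kronecker
open MeasureTheory

noncomputable section

/-- The four 2×2 Pauli matrices `I, X, Y, Z`. -/
def pauliσ : Fin 4 → Matrix (Fin 2) (Fin 2) ℂ
  | 0 => !![1, 0; 0, 1]
  | 1 => !![0, 1; 1, 0]
  | 2 => !![0, -Complex.I; Complex.I, 0]
  | 3 => !![1, 0; 0, -1]

/-- The `n`-qubit Pauli matrix `P_s = σ_{s 1} ⊗ ⋯ ⊗ σ_{s n}` (Kronecker product),
realized as a matrix indexed by `Fin n → Fin 2` (a space of dimension `2^n`). -/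
def pauli {n : ℕ} (s : Fin n → Fin 4) : Matrix (Fin n → Fin 2) (Fin n → Fin 2) ℂ :=
  fun x y => ∏ i, pauliσ (s i) (x i) (y i)


/-! The Pauli matrices are Hermitian and complete: `∑ₛ (Pₛ)ₓᵧ (Pₛ)_zw = d δ_xw δ_yz`, i.e.
`d • A = ∑ₛ Tr(Pₛ A) Pₛ`, hence `∑ₛ Tr(Pₛ A) Tr(Pₛ B) = d Tr(A B)`. Write `aₛ = ⟨φ, Pₛ ψ⟩`, which is
`Tr(Pₛ ψφ*)`; by Hermiticity `⟨ψ, Pₛ φ⟩ = conj aₛ`, so on the support `Pr(s) Xₛ = Tr(Pₛ ρ) aₛ / d`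
and `Pr(s) |Xₛ|² = |Tr(Pₛ ρ)|² / d`. Summing over all `s` with `A = ρ` and `B = ψφ*`,
resp. `B = ρᴴ = ρ`, gives the mean `Tr(ρ ψφ*) = ⟨φ, ρ ψ⟩` and the bound `Tr(ρ²)` on the
second moment. -/

section PauliExpansion

open Finset Matrix ComplexConjugate

theorem pauliσ_isHermitian (k : Fin 4) : (pauliσ k).IsHermitian := by
  ext x y
  fin_cases k <;> fin_cases x <;> fin_cases y <;> simp [pauliσ]

theorem sum_pauliσ_apply_mul_pauliσ_apply (x y z w : Fin 2) :
    ∑ k, pauliσ k x y * pauliσ k z w = if x = w ∧ y = z then 2 else 0 := by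
  fin_cases x <;> fin_cases y <;> fin_cases z <;> fin_cases w <;>
    simp [pauliσ, Fin.sum_univ_four] <;> norm_num

variable {n : ℕ}

theorem pauli_isHermitian (s : Fin n → Fin 4) : (pauli s).IsHermitian := by
  ext x y
  simp only [conjTranspose_apply, pauli, star_prod]
  exact prod_congr rfl fun i _ => (pauliσ_isHermitian (s i)).apply (x i) (y i)

theorem sum_pauli_apply_mul_pauli_apply (x y z w : Fin n → Fin 2) :
    ∑ s, pauli s x y * pauli s z w = if x = w ∧ y = z then 2 ^ n else 0 := by
  simp_rw [pauli, ← prod_mul_distrib]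
  rw [← Fintype.prod_sum fun i k => pauliσ k (x i) (y i) * pauliσ k (z i) (w i)]
  simp_rw [sum_pauliσ_apply_mul_pauliσ_apply, Fintype.prod_ite_zero, forall_and, ← funext_iff]
  simp

theorem sum_trace_pauli_mul_smul_pauli (A : Matrix (Fin n → Fin 2) (Fin n → Fin 2) ℂ) :
    ∑ s, (pauli s * A).trace • pauli s = (2 ^ n : ℂ) • A := by
  ext z w
  calc (∑ s, (pauli s * A).trace • pauli s) z w
      = ∑ x, ∑ y, A y x * ∑ s, pauli s x y * pauli s z w := by
        simp only [Matrix.sum_apply, Matrix.smul_apply, trace, Matrix.diag, mul_apply,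
          smul_eq_mul, sum_mul, mul_sum]
        rw [sum_comm]
        refine sum_congr rfl fun x _ => ?_
        rw [sum_comm]
        exact sum_congr rfl fun y _ => sum_congr rfl fun s _ => by ring
    _ = ((2 ^ n : ℂ) • A) z w := by
        simp [sum_pauli_apply_mul_pauli_apply, ite_and, mul_comm]

theorem sum_trace_pauli_mul_mul_trace_pauli_mul
    (A B : Matrix (Fin n → Fin 2) (Fin n → Fin 2) ℂ) :
    ∑ s, (pauli s * A).trace * (pauli s * B).trace = 2 ^ n * (A * B).trace := by
  calc ∑ s, (pauli s * A).trace * (pauli s * B).trace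
      = ((∑ s, (pauli s * A).trace • pauli s) * B).trace := by
        simp [sum_mul, trace_sum, trace_smul]
    _ = 2 ^ n * (A * B).trace := by
        rw [sum_trace_pauli_mul_smul_pauli, smul_mul, trace_smul, smul_eq_mul]

theorem star_trace_pauli_mul (s : Fin n → Fin 4) (A : Matrix (Fin n → Fin 2) (Fin n → Fin 2) ℂ) :
    star (pauli s * A).trace = (pauli s * Aᴴ).trace := by
  rw [← trace_conjTranspose, conjTranspose_mul, (pauli_isHermitian s).eq, trace_mul_comm]

theorem sum_norm_trace_pauli_mul_sq (A : Matrix (Fin n → Fin 2) (Fin n → Fin 2) ℂ) :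
    ∑ s, ‖(pauli s * A).trace‖ ^ 2 = 2 ^ n * (A * Aᴴ).trace.re := by
  have h := congrArg Complex.re (sum_trace_pauli_mul_mul_trace_pauli_mul A Aᴴ)
  simp_rw [← star_trace_pauli_mul, Complex.star_def, Complex.mul_conj', Complex.re_sum] at h
  rw [← Complex.ofReal_ofNat, ← Complex.ofReal_pow, Complex.re_ofReal_mul] at h
  simpa [← Complex.ofReal_pow] using h

theorem Matrix.IsHermitian.star_dotProduct_mulVec_eq_star {m R : Type*} [Fintype m]
    [CommSemiring R] [StarRing R] {P : Matrix m m R} (hP : P.IsHermitian) (φ ψ : m → R) :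
    star ψ ⬝ᵥ P *ᵥ φ = star (star φ ⬝ᵥ P *ᵥ ψ) := by
  rw [star_dotProduct, star_mulVec, hP.eq, ← dotProduct_mulVec]

theorem Matrix.trace_mul_vecMulVec {m R : Type*} [Fintype m] [CommSemiring R]
    (C : Matrix m m R) (v u : m → R) :
    (C * vecMulVec v u).trace = u ⬝ᵥ C *ᵥ v := by
  rw [mul_vecMulVec, trace_vecMulVec, dotProduct_comm]

-- Holds also for `a = 0` (both sides vanish as `z / 0 = 0`), so the support restriction can be
-- dropped.
theorem Complex.ofReal_norm_sq_div_mul_div_conj (a z : ℂ) (d : ℝ) :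
    ((‖a‖ ^ 2 / d : ℝ) : ℂ) * (z / conj a) = z * a / d := by
  rcases eq_or_ne a 0 with rfl | ha
  · simp
  · have : conj a ≠ 0 := by simpa using ha
    rw [Complex.ofReal_div, Complex.ofReal_pow, ← Complex.mul_conj']
    field_simp

theorem Complex.norm_sq_div_mul_norm_div_conj_sq {a : ℂ} (ha : a ≠ 0) (z : ℂ) (d : ℝ) :
    ‖a‖ ^ 2 / d * ‖z / conj a‖ ^ 2 = ‖z‖ ^ 2 / d := by
  have : ‖a‖ ≠ 0 := by simpa using ha
  rw [norm_div, Complex.norm_conj]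
  field_simp

end PauliExpansion

open Classical in
theorem dfe_rank_one_unbiased_and_second_moment_general
    {n : ℕ}
    (ρ : Matrix (Fin n → Fin 2) (Fin n → Fin 2) ℂ) (hρ : ρ.IsHermitian)
    (φ ψ : (Fin n → Fin 2) → ℂ) :
    (∑ s ∈ Finset.univ.filter
        (fun s : Fin n → Fin 4 => star ψ ⬝ᵥ pauli s *ᵥ φ ≠ 0),
        ((‖star φ ⬝ᵥ pauli s *ᵥ ψ‖ ^ 2 / (2 ^ n : ℝ) : ℝ) : ℂ) *
          ((pauli s * ρ).trace / (star ψ ⬝ᵥ pauli s *ᵥ φ)) =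
      star φ ⬝ᵥ ρ *ᵥ ψ) ∧
    (∑ s ∈ Finset.univ.filter
        (fun s : Fin n → Fin 4 => star ψ ⬝ᵥ pauli s *ᵥ φ ≠ 0),
        (‖star φ ⬝ᵥ pauli s *ᵥ ψ‖ ^ 2 / (2 ^ n : ℝ)) *
          ‖(pauli s * ρ).trace / (star ψ ⬝ᵥ pauli s *ᵥ φ)‖ ^ 2 ≤
      ((ρ * ρ).trace).re) := by
  have hconj (s : Fin n → Fin 4) :
      star ψ ⬝ᵥ pauli s *ᵥ φ = starRingEnd ℂ (star φ ⬝ᵥ pauli s *ᵥ ψ) :=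
    (pauli_isHermitian s).star_dotProduct_mulVec_eq_star φ ψ
  simp only [hconj]
  constructor
  · rw [Finset.sum_filter_of_ne fun s _ h => (div_ne_zero_iff.mp (right_ne_zero_of_mul h)).2]
    simp_rw [Complex.ofReal_norm_sq_div_mul_div_conj, ← Matrix.trace_mul_vecMulVec,
      ← Finset.sum_div, sum_trace_pauli_mul_mul_trace_pauli_mul]
    push_cast
    exact mul_div_cancel_left₀ _ (by positivity)
  · calc _ = ∑ s ∈ Finset.univ.filter (fun s => starRingEnd ℂ (star φ ⬝ᵥ pauli s *ᵥ ψ) ≠ 0),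
            ‖(pauli s * ρ).trace‖ ^ 2 / (2 ^ n : ℝ) :=
          Finset.sum_congr rfl fun s hs => Complex.norm_sq_div_mul_norm_div_conj_sq
            (by simpa using (Finset.mem_filter.mp hs).2) _ _
      _ ≤ ∑ s, ‖(pauli s * ρ).trace‖ ^ 2 / (2 ^ n : ℝ) := by
          refine Finset.sum_le_univ_sum_of_nonneg fun _ => ?_
          positivity
      _ = (ρ * ρ).trace.re := by
          rw [← Finset.sum_div, sum_norm_trace_pauli_mul_sq, hρ.eq]
          field_simp

open Classical in
/-- **Direct fidelity estimation for non-Hermitian rank-one observables**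
(Section IV of "Quantum Tomography via Compressed Sensing").

Sampling Pauli labels `s` with probability `Pr(s) = |⟨φ, P_s ψ⟩|²/d` and using
the estimator `X_s = Tr(P_s ρ)/⟨ψ, P_s φ⟩` on its support: the estimator is
unbiased with mean `⟨φ, ρ ψ⟩`, and its second moment is at most `Tr(ρ²)`. -/
theorem dfe_rank_one_unbiased_and_second_moment
    {n : ℕ} (hn : 1 ≤ n)
    (ρ : Matrix (Fin n → Fin 2) (Fin n → Fin 2) ℂ) (hρ : ρ.IsHermitian)
    (φ ψ : (Fin n → Fin 2) → ℂ)
    (hφ : ∑ x, ‖φ x‖ ^ 2 = 1) (hψ : ∑ x, ‖ψ x‖ ^ 2 = 1) :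
    (∑ s ∈ Finset.univ.filter
        (fun s : Fin n → Fin 4 => star ψ ⬝ᵥ pauli s *ᵥ φ ≠ 0),
        ((‖star φ ⬝ᵥ pauli s *ᵥ ψ‖ ^ 2 / (2 ^ n : ℝ) : ℝ) : ℂ) *
          ((pauli s * ρ).trace / (star ψ ⬝ᵥ pauli s *ᵥ φ)) =
      star φ ⬝ᵥ ρ *ᵥ ψ) ∧
    (∑ s ∈ Finset.univ.filter
        (fun s : Fin n → Fin 4 => star ψ ⬝ᵥ pauli s *ᵥ φ ≠ 0),
        (‖star φ ⬝ᵥ pauli s *ᵥ ψ‖ ^ 2 / (2 ^ n : ℝ)) *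
          ‖(pauli s * ρ).trace / (star ψ ⬝ᵥ pauli s *ᵥ φ)‖ ^ 2 ≤
      ((ρ * ρ).trace).re) :=
  dfe_rank_one_unbiased_and_second_moment_general ρ hρ φ ψ
end
end
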